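/- arXiv:1410.5033 — 2 statements merged into one kernel-verified Lean document; each statement's English description precedes it below -/
import Mathlib

section
/- (K·L bound) For every KL-function β there exists a K·L-function β̄ such that β(s, t) ≤ β̄(s, t) for all s, t ≥ 0. In fact, there exist K∞-functions α₁, α₂ such that β(s, t) ≤ α₁(s)·α₂(e^{−t}) for all s, t ≥ 0. -/
open Filter Topology

/-- A K-function: continuous on [0,∞), strictly increasing on [0,∞), zero at zero. -/
def IsKFun (α : ℝ → ℝ) : Prop :=
  ContinuousOn α (Set.Ici 0) ∧ StrictMonoOn α (Set.Ici 0) ∧ α 0 = 0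

/-- A K∞-function: a K-function tending to ∞ at ∞. -/
def IsKInftyFun (α : ℝ → ℝ) : Prop :=
  IsKFun α ∧ Tendsto α atTop atTop

/-- An L-function: continuous on [0,∞), nonincreasing on [0,∞), tending to 0 at ∞. -/
def IsLFun (φ : ℝ → ℝ) : Prop :=
  ContinuousOn φ (Set.Ici 0) ∧ AntitoneOn φ (Set.Ici 0) ∧ Tendsto φ atTop (𝓝 0)

/-- A KL-function. -/
def IsKLFun (β : ℝ → ℝ → ℝ) : Prop :=
  (∀ t, 0 ≤ t → IsKFun fun s => β s t) ∧ (∀ s, 0 ≤ s → IsLFun fun t => β s t)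

/-- Auxiliary increasing time sequence. -/
private def tseqAux (T : ℕ → ℝ) : ℕ → ℝ
  | 0 => 0
  | n + 1 => max (tseqAux T n + 1) (T (n + 1))

private lemma tseqAux_zero (T : ℕ → ℝ) : tseqAux T 0 = 0 := rfl

private lemma tseqAux_succ_ge (T : ℕ → ℝ) (n : ℕ) : tseqAux T n + 1 ≤ tseqAux T (n + 1) :=
  le_max_left _ _

private lemma tseqAux_ge_T (T : ℕ → ℝ) (n : ℕ) : T (n + 1) ≤ tseqAux T (n + 1) :=
  le_max_right _ _

private lemma tseqAux_ge_nat (T : ℕ → ℝ) (n : ℕ) : (n : ℝ) ≤ tseqAux T n := by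
  induction n with
  | zero => simp [tseqAux_zero]
  | succ k ih =>
    have := tseqAux_succ_ge T k
    push_cast
    linarith

/-- From a `K∞` pair satisfying the product bound, derive the `K·L` form. -/
private lemma Lfun_of_KInfty (α₂ : ℝ → ℝ) (h2 : IsKInftyFun α₂) :
    IsLFun (fun t => α₂ (Real.exp (-t))) := by
  obtain ⟨⟨hc, hm, h0⟩, _⟩ := h2
  refine ⟨?_, ?_, ?_⟩
  · apply hc.comp (Continuous.continuousOn (by continuity))
    intro t _
    exact Set.mem_Ici.mpr (Real.exp_pos _).le
  · intro a _ b _ hab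
    exact hm.monotoneOn (Set.mem_Ici.mpr (Real.exp_pos _).le)
      (Set.mem_Ici.mpr (Real.exp_pos _).le)
      (Real.exp_le_exp.mpr (by linarith))
  · have hcw : ContinuousWithinAt α₂ (Set.Ici 0) 0 := hc 0 (Set.mem_Ici.mpr le_rfl)
    have hto : Tendsto (fun t : ℝ => Real.exp (-t)) atTop (𝓝[Set.Ici 0] 0) := by
      apply tendsto_nhdsWithin_of_tendsto_nhds_of_eventually_within
      · exact Real.tendsto_exp_neg_atTop_nhds_zero
      · exact Eventually.of_forall fun t => Set.mem_Ici.mpr (Real.exp_pos _).le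
    have := hcw.tendsto.comp hto
    rwa [h0] at this

/-- The key construction. -/
private lemma klfun_main (β : ℝ → ℝ → ℝ) (hβ : IsKLFun β) :
    ∃ α₁ α₂ : ℝ → ℝ, IsKInftyFun α₁ ∧ IsKInftyFun α₂ ∧
      ∀ s t : ℝ, 0 ≤ s → 0 ≤ t → β s t ≤ α₁ s * α₂ (Real.exp (-t)) := by
  obtain ⟨hK, hL⟩ := hβ
  -- basic facts
  have hβ0 : ∀ t : ℝ, 0 ≤ t → β 0 t = 0 := fun t ht => (hK t ht).2.2
  have hβmono : ∀ t : ℝ, 0 ≤ t → MonotoneOn (fun s => β s t) (Set.Ici 0) :=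
    fun t ht => (hK t ht).2.1.monotoneOn
  have hβnn : ∀ s t : ℝ, 0 ≤ s → 0 ≤ t → 0 ≤ β s t := by
    intro s t hs ht
    have h := hβmono t ht (Set.mem_Ici.mpr le_rfl) (Set.mem_Ici.mpr hs) hs
    simp only at h
    rwa [hβ0 t ht] at h
  have hβanti : ∀ s : ℝ, 0 ≤ s → AntitoneOn (fun t => β s t) (Set.Ici 0) :=
    fun s hs => (hL s hs).2.1
  have hβs0 : ∀ s t : ℝ, 0 ≤ s → 0 ≤ t → β s t ≤ β s 0 :=
    fun s t hs ht => hβanti s hs (Set.mem_Ici.mpr le_rfl) (Set.mem_Ici.mpr ht) ht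
  -- choose times after which β (n, ·) is small
  have hTex : ∀ n : ℕ, ∃ T : ℝ, ∀ u : ℝ, T ≤ u → β n u ≤ (1/4 : ℝ) ^ (n + 2) := by
    intro n
    have htend : Tendsto (fun t => β n t) atTop (𝓝 0) := (hL n n.cast_nonneg).2.2
    have hev : ∀ᶠ u in atTop, β n u < (1/4 : ℝ) ^ (n + 2) :=
      htend.eventually_lt_const (by positivity)
    obtain ⟨T, hT⟩ := eventually_atTop.mp hev
    exact ⟨T, fun u hu => (hT u hu).le⟩
  choose T hT using hTex
  set tt : ℕ → ℝ := tseqAux T with htt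
  have htt0 : tt 0 = 0 := rfl
  have httnat : ∀ n : ℕ, (n : ℝ) ≤ tt n := tseqAux_ge_nat T
  have httkey : ∀ n : ℕ, ∀ u : ℝ, tt (n + 1) ≤ u → β (n + 1 : ℕ) u ≤ (1/4 : ℝ) ^ (n + 3) := by
    intro n u hu
    have := hT (n + 1) u (le_trans (tseqAux_ge_T T n) hu)
    simpa using this
  -- the two functions
  set F : ℕ → ℝ → ℝ := fun n r => (1/2 : ℝ) ^ (n + 1) * min 1 (max r 0 * Real.exp (tt n))
    with hF
  have hF0 : ∀ n r, 0 ≤ F n r := by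
    intro n r
    apply mul_nonneg (by positivity)
    exact le_min one_pos.le (mul_nonneg (le_max_right _ _) (Real.exp_pos _).le)
  have hFle : ∀ n r, F n r ≤ (1/2 : ℝ) ^ (n + 1) := by
    intro n r
    have : min 1 (max r 0 * Real.exp (tt n)) ≤ 1 := min_le_left _ _
    calc F n r ≤ (1/2 : ℝ) ^ (n + 1) * 1 := by
          exact mul_le_mul_of_nonneg_left this (by positivity)
      _ = (1/2 : ℝ) ^ (n + 1) := mul_one _
  have hgeom : Summable fun n : ℕ => (1/2 : ℝ) ^ (n + 1) := by
    have := (summable_geometric_of_lt_one (by norm_num : (0:ℝ) ≤ 1/2) (by norm_num)).mul_right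
      (1/2 : ℝ)
    simpa [pow_succ] using this
  have hsumF : ∀ r, Summable fun n => F n r := by
    intro r
    exact Summable.of_nonneg_of_le (fun n => hF0 n r) (fun n => hFle n r) hgeom
  set α₂ : ℝ → ℝ := fun r => r + ∑' n, F n r with hα₂
  have hα₂cont : Continuous α₂ := by
    apply continuous_id.add
    apply continuous_tsum
    · intro n
      apply continuous_const.mul
      exact (continuous_const.min ((continuous_id.max continuous_const).mul continuous_const))
    · exact hgeom
    · intro n x
      rw [Real.norm_eq_abs, abs_of_nonneg (hF0 n x)]
      exact hFle n x
  have hFmono : ∀ n, Monotone fun r => F n r := by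
    intro n r r' hrr
    apply mul_le_mul_of_nonneg_left _ (by positivity)
    exact min_le_min le_rfl
      (mul_le_mul_of_nonneg_right (max_le_max hrr le_rfl) (Real.exp_pos _).le)
  have hα₂sm : StrictMono α₂ := by
    intro r r' hrr
    exact add_lt_add_of_lt_of_le hrr (Summable.tsum_le_tsum (fun n => hFmono n hrr.le) (hsumF r) (hsumF r'))
  have hα₂0 : α₂ 0 = 0 := by
    have hFz : ∀ n, F n 0 = 0 := by
      intro n
      rw [hF]
      norm_num
    show (0 : ℝ) + ∑' n, F n 0 = 0
    simp [hFz]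
  have hα₂nn : ∀ r, 0 ≤ r → 0 ≤ α₂ r := by
    intro r hr
    exact add_nonneg hr (tsum_nonneg fun n => hF0 n r)
  have hα₂top : Tendsto α₂ atTop atTop := by
    apply tendsto_atTop_mono _ tendsto_id
    intro r
    exact le_add_of_nonneg_right (tsum_nonneg fun n => hF0 n r)
  have hα₂K : IsKInftyFun α₂ :=
    ⟨⟨hα₂cont.continuousOn, hα₂sm.strictMonoOn _, hα₂0⟩, hα₂top⟩
  -- lower bound on α₂
  have hα₂low : ∀ (u : ℝ) (n : ℕ), 0 ≤ u → u < tt (n + 1) →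
      (1/2 : ℝ) ^ (n + 2) ≤ α₂ (Real.exp (-u)) := by
    intro u n _ hu
    have h1 : F (n + 1) (Real.exp (-u)) = (1/2 : ℝ) ^ (n + 2) := by
      have hmax : max (Real.exp (-u)) 0 = Real.exp (-u) := max_eq_left (Real.exp_pos _).le
      have hprod : (1:ℝ) ≤ Real.exp (-u) * Real.exp (tt (n + 1)) := by
        rw [← Real.exp_add]
        apply Real.one_le_exp
        linarith
      rw [hF]
      simp only [hmax, min_eq_left hprod]
      ring
    have h2 : F (n + 1) (Real.exp (-u)) ≤ ∑' m, F m (Real.exp (-u)) :=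
      Summable.le_tsum (hsumF _) (n + 1) (fun m _ => hF0 m _)
    have h3 : (0:ℝ) ≤ Real.exp (-u) := (Real.exp_pos _).le
    rw [hα₂]
    simp only []
    rw [← h1]
    linarith
  -- α₁
  set α₁ : ℝ → ℝ := fun s => 4 * Real.exp s * β s 0 + Real.sqrt (β s 0) with hα₁
  have hβ00 : β 0 0 = 0 := hβ0 0 le_rfl
  have hβs0nn : ∀ s : ℝ, 0 ≤ s → 0 ≤ β s 0 := fun s hs => hβnn s 0 hs le_rfl
  have hα₁nn : ∀ s : ℝ, 0 ≤ s → 0 ≤ α₁ s := by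
    intro s hs
    apply add_nonneg _ (Real.sqrt_nonneg _)
    have := hβs0nn s hs
    positivity
  have hα₁K : IsKInftyFun α₁ := by
    refine ⟨⟨?_, ?_, ?_⟩, ?_⟩
    · apply ContinuousOn.add
      · exact (continuous_const.mul Real.continuous_exp).continuousOn.mul (hK 0 le_rfl).1
      · exact Real.continuous_sqrt.comp_continuousOn (hK 0 le_rfl).1
    · intro a ha b hb hab
      have ha' : (0:ℝ) ≤ a := ha
      have hb' : (0:ℝ) ≤ b := hb
      have h1 : β a 0 < β b 0 := (hK 0 le_rfl).2.1 ha hb hab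
      have h2 : 0 ≤ β a 0 := hβs0nn a ha'
      apply add_lt_add_of_lt_of_le
      · apply mul_lt_mul''
        · have : Real.exp a < Real.exp b := Real.exp_lt_exp.mpr hab
          nlinarith [Real.exp_pos a]
        · exact h1
        · positivity
        · exact h2
      · exact Real.sqrt_le_sqrt h1.le
    · show 4 * Real.exp 0 * β 0 0 + Real.sqrt (β 0 0) = 0
      simp [hβ00]
    · have h1pos : 0 < β 1 0 := by
        have h : β 0 0 < β 1 0 := (hK 0 le_rfl).2.1 (Set.mem_Ici.mpr le_rfl)
          (Set.mem_Ici.mpr zero_le_one) zero_lt_one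
        rwa [hβ00] at h
      apply tendsto_atTop_mono' _ _ ((Real.tendsto_exp_atTop.const_mul_atTop
        (by positivity : (0:ℝ) < 4 * β 1 0)))
      filter_upwards [eventually_ge_atTop (1:ℝ)] with s hs
      have hm : β 1 0 ≤ β s 0 := hβmono 0 le_rfl (Set.mem_Ici.mpr zero_le_one)
        (Set.mem_Ici.mpr (by linarith)) hs
      have hsq : 0 ≤ Real.sqrt (β s 0) := Real.sqrt_nonneg _
      have he : 0 < Real.exp s := Real.exp_pos s
      show _ ≤ 4 * Real.exp s * β s 0 + Real.sqrt (β s 0)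
      nlinarith
  refine ⟨α₁, α₂, hα₁K, hα₂K, ?_⟩
  intro s t hs ht
  -- locate t
  have hex : ∃ m : ℕ, t < tt (m + 1) := by
    obtain ⟨m, hm⟩ := exists_nat_gt t
    refine ⟨m, lt_of_lt_of_le hm ?_⟩
    calc (m : ℝ) ≤ (m + 1 : ℕ) := by push_cast; linarith
      _ ≤ tt (m + 1) := httnat (m + 1)
  obtain ⟨n, hn1, hn2⟩ : ∃ n : ℕ, tt n ≤ t ∧ t < tt (n + 1) := by
    refine ⟨Nat.find hex, ?_, Nat.find_spec hex⟩
    rcases Nat.eq_zero_or_pos (Nat.find hex) with h0 | hpos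
    · rw [h0, htt0]; exact ht
    · obtain ⟨k, hk⟩ := Nat.exists_eq_succ_of_ne_zero hpos.ne'
      rw [hk]
      have h := Nat.find_min hex (show k < Nat.find hex by omega)
      push_neg at h
      exact h
  have hlow : (1/2 : ℝ) ^ (n + 2) ≤ α₂ (Real.exp (-t)) := hα₂low t n ht hn2
  have hα₂e : 0 ≤ α₂ (Real.exp (-t)) := le_trans (by positivity) hlow
  have hsqrt_le : Real.sqrt (β s 0) ≤ α₁ s := by
    show _ ≤ 4 * Real.exp s * β s 0 + Real.sqrt (β s 0)
    have := hβs0nn s hs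
    have he := Real.exp_pos s
    nlinarith
  by_cases hsn : s ≤ (n : ℝ)
  · -- small s
    rcases Nat.eq_zero_or_pos n with h0 | hpos
    · -- n = 0 forces s = 0
      have hs0 : s = 0 := le_antisymm (by rw [h0] at hsn; exact_mod_cast hsn) hs
      rw [hs0, hβ0 t ht]
      exact mul_nonneg (hα₁nn 0 le_rfl) hα₂e
    · obtain ⟨k, rfl⟩ := Nat.exists_eq_succ_of_ne_zero hpos.ne'
      have hsqhalf : Real.sqrt ((1/4 : ℝ) ^ (k + 3)) = (1/2 : ℝ) ^ (k + 3) := by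
        rw [show ((1/4 : ℝ)) ^ (k + 3) = ((1/2 : ℝ) ^ (k + 3)) ^ 2 by
          rw [← pow_mul, Nat.mul_comm, pow_mul]; norm_num]
        exact Real.sqrt_sq (by positivity)
      -- β s t ≤ min (β s 0) ((1/4)^(k+3))
      have hb1 : β s t ≤ β ((k + 1 : ℕ) : ℝ) t := by
        apply hβmono t ht (Set.mem_Ici.mpr hs) (Set.mem_Ici.mpr (k + 1 : ℕ).cast_nonneg)
        exact_mod_cast hsn
      have hb2 : β ((k + 1 : ℕ) : ℝ) t ≤ (1/4 : ℝ) ^ (k + 3) := httkey k t hn1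
      have hb3 : β s t ≤ β s 0 := hβs0 s t hs ht
      have key : β s t ≤ Real.sqrt (β s 0) * (1/2 : ℝ) ^ (k + 3) := by
        by_cases hc : β s 0 ≤ (1/4 : ℝ) ^ (k + 3)
        · have hsq : Real.sqrt (β s 0) ≤ (1/2 : ℝ) ^ (k + 3) := by
            calc Real.sqrt (β s 0) ≤ Real.sqrt ((1/4 : ℝ) ^ (k + 3)) := Real.sqrt_le_sqrt hc
              _ = (1/2 : ℝ) ^ (k + 3) := hsqhalf
          calc β s t ≤ β s 0 := hb3
            _ = Real.sqrt (β s 0) * Real.sqrt (β s 0) :=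
                (Real.mul_self_sqrt (hβs0nn s hs)).symm
            _ ≤ Real.sqrt (β s 0) * (1/2 : ℝ) ^ (k + 3) :=
                mul_le_mul_of_nonneg_left hsq (Real.sqrt_nonneg _)
        · push_neg at hc
          have hsq : (1/2 : ℝ) ^ (k + 3) ≤ Real.sqrt (β s 0) := by
            calc (1/2 : ℝ) ^ (k + 3) = Real.sqrt ((1/4 : ℝ) ^ (k + 3)) := hsqhalf.symm
              _ ≤ Real.sqrt (β s 0) := Real.sqrt_le_sqrt hc.le
          calc β s t ≤ (1/4 : ℝ) ^ (k + 3) := le_trans hb1 hb2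
            _ = (1/2 : ℝ) ^ (k + 3) * (1/2 : ℝ) ^ (k + 3) := by
                rw [← pow_add, show (1/4 : ℝ) = (1/2 : ℝ) ^ 2 by norm_num, ← pow_mul]
                congr 1
                omega
            _ ≤ Real.sqrt (β s 0) * (1/2 : ℝ) ^ (k + 3) :=
                mul_le_mul_of_nonneg_right hsq (by positivity)
      calc β s t ≤ Real.sqrt (β s 0) * (1/2 : ℝ) ^ (k + 3) := key
        _ ≤ Real.sqrt (β s 0) * α₂ (Real.exp (-t)) := by
            apply mul_le_mul_of_nonneg_left _ (Real.sqrt_nonneg _)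
            exact hlow
        _ ≤ α₁ s * α₂ (Real.exp (-t)) := mul_le_mul_of_nonneg_right hsqrt_le hα₂e
  · -- large s
    push_neg at hsn
    have hb3 : β s t ≤ β s 0 := hβs0 s t hs ht
    have h2n : (2 : ℝ) ^ n ≤ Real.exp s := by
      calc (2 : ℝ) ^ n ≤ Real.exp 1 ^ n := by
            apply pow_le_pow_left₀ (by norm_num)
            have := Real.add_one_le_exp (1 : ℝ)
            linarith
        _ = Real.exp n := by rw [← Real.exp_nat_mul]; ring_nf
        _ ≤ Real.exp s := Real.exp_le_exp.mpr hsn.le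
    have hfac : 1 ≤ 4 * Real.exp s * (1/2 : ℝ) ^ (n + 2) := by
      have heq : (4 : ℝ) * (2:ℝ)^n * (1/2 : ℝ) ^ (n + 2) = 1 := by
        rw [show (4 : ℝ) * (2:ℝ)^n = (2:ℝ)^(n+2) by rw [pow_add]; ring,
          ← mul_pow]
        norm_num
      nlinarith [pow_pos (by norm_num : (0:ℝ) < (1/2:ℝ)) (n + 2)]
    have hβnn' : 0 ≤ β s 0 := hβs0nn s hs
    calc β s t ≤ β s 0 := hb3
      _ = β s 0 * 1 := (mul_one _).symm
      _ ≤ β s 0 * (4 * Real.exp s * (1/2 : ℝ) ^ (n + 2)) :=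
          mul_le_mul_of_nonneg_left hfac hβnn'
      _ = (4 * Real.exp s * β s 0) * (1/2 : ℝ) ^ (n + 2) := by ring
      _ ≤ (4 * Real.exp s * β s 0) * α₂ (Real.exp (-t)) := by
          apply mul_le_mul_of_nonneg_left hlow
          have he := Real.exp_pos s
          positivity
      _ ≤ α₁ s * α₂ (Real.exp (-t)) := by
          apply mul_le_mul_of_nonneg_right _ hα₂e
          show _ ≤ 4 * Real.exp s * β s 0 + Real.sqrt (β s 0)
          have := Real.sqrt_nonneg (β s 0)
          linarith

/-- (K·L bound) Every KL-function is dominated by a K·L-function; in fact by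
`α₁(s)·α₂(e^{-t})` for K∞-functions `α₁, α₂`. -/
theorem klfun_dominated_by_KdotL (β : ℝ → ℝ → ℝ) (hβ : IsKLFun β) :
    (∃ ᾱ φ : ℝ → ℝ, IsKFun ᾱ ∧ IsLFun φ ∧
      ∀ s t : ℝ, 0 ≤ s → 0 ≤ t → β s t ≤ ᾱ s * φ t) ∧
    (∃ α₁ α₂ : ℝ → ℝ, IsKInftyFun α₁ ∧ IsKInftyFun α₂ ∧
      ∀ s t : ℝ, 0 ≤ s → 0 ≤ t → β s t ≤ α₁ s * α₂ (Real.exp (-t))) := by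
  obtain ⟨α₁, α₂, h1, h2, hbd⟩ := klfun_main β hβ
  constructor
  · exact ⟨α₁, fun t => α₂ (Real.exp (-t)), h1.1, Lfun_of_KInfty α₂ h2, hbd⟩
  · exact ⟨α₁, α₂, h1, h2, hbd⟩
end

section
/- (Key step in the proof of Corollary 1: condition (c) implies Assumption 2) Let β(s,t) = μ₁(s)·φ₁(t), ρ̲ₓ(s,t) = μ₂(s)·φ₂(t), ρₓ(s,t) = μ₃(s)·φ₂(t), where μ₁, μ₂, μ₃ are K-functions with μ₂ a K∞-function, φ₁, φ₂ are L-functions with φ₂(t) > 0 for all t, and β, ρ̲ₓ, ρₓ are KL-functions. Let γ_w, γ_v be K∞-functions, and set γ̲_{x,t}(s) := ρ̲ₓ(s,t) with inverse γ̲_{x,t}⁻¹. Suppose that for every K-function π there exists a K-function π′ such that μ₁(4·μ₂⁻¹(π(s)/φ₂(t)))·φ₁(t) ≤ π′(s) for all s, t ≥ 0. Then there exist a KL-function β̄ₓ′ and K-functions ᾱ_w, ᾱ_v such that for all sₓ, s_w, s_v, t ≥ 0: β(sₓ + γ̲_{x,t}⁻¹(ρₓ(sₓ, t) + γ_w(s_w)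 + γ_v(s_v)), t) ≤ β̄ₓ′(sₓ, t) + ᾱ_w(s_w) + ᾱ_v(s_v). -/
open Filter Topology

lemma kfun_nonneg {α : ℝ → ℝ} (h : IsKFun α) {s : ℝ} (hs : 0 ≤ s) : 0 ≤ α s := by
  have := h.2.1.monotoneOn (Set.mem_Ici.mpr le_rfl) (Set.mem_Ici.mpr hs) hs
  rwa [h.2.2] at this

lemma lfun_nonneg {φ : ℝ → ℝ} (h : IsLFun φ) {t : ℝ} (ht : 0 ≤ t) : 0 ≤ φ t := by
  refine le_of_tendsto h.2.2 ?_
  filter_upwards [eventually_ge_atTop t] with u hu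
  exact h.2.1 (Set.mem_Ici.mpr ht) (Set.mem_Ici.mpr (ht.trans hu)) hu

/-- (Key step in the proof of Corollary 1: condition (c) implies Assumption 2.) -/
theorem key_condition_implies_assumption2
    (μ₁ μ₂ μ₃ : ℝ → ℝ) (φ₁ φ₂ : ℝ → ℝ)
    (hμ₁ : IsKFun μ₁) (hμ₂ : IsKInftyFun μ₂) (hμ₃ : IsKFun μ₃)
    (hφ₁ : IsLFun φ₁) (hφ₂ : IsLFun φ₂) (hφ₂pos : ∀ t : ℝ, 0 ≤ t → 0 < φ₂ t)
    -- β, ρ̲ₓ, ρₓ are KL-functions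
    (hβKL : IsKLFun fun s t => μ₁ s * φ₁ t)
    (hρₗKL : IsKLFun fun s t => μ₂ s * φ₂ t)
    (hρᵤKL : IsKLFun fun s t => μ₃ s * φ₂ t)
    (γw γv : ℝ → ℝ) (hγw : IsKInftyFun γw) (hγv : IsKInftyFun γv)
    -- γ̲_{x,t}⁻¹ : for each t ≥ 0, the inverse on [0,∞) of s ↦ μ₂(s)·φ₂(t)
    (ι : ℝ → ℝ → ℝ)
    (hι₁ : ∀ t : ℝ, 0 ≤ t → ∀ s : ℝ, 0 ≤ s → ι (μ₂ s * φ₂ t) t = s)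
    (hι₂ : ∀ t : ℝ, 0 ≤ t → ∀ r : ℝ, 0 ≤ r → μ₂ (ι r t) * φ₂ t = r ∧ 0 ≤ ι r t)
    -- μ₂⁻¹ : the inverse on [0,∞) of μ₂
    (μ₂inv : ℝ → ℝ)
    (hμ₂inv₁ : ∀ s : ℝ, 0 ≤ s → μ₂inv (μ₂ s) = s)
    (hμ₂inv₂ : ∀ r : ℝ, 0 ≤ r → μ₂ (μ₂inv r) = r ∧ 0 ≤ μ₂inv r)
    -- the key sensitivity condition
    (hkey : ∀ π : ℝ → ℝ, IsKFun π → ∃ π' : ℝ → ℝ, IsKFun π' ∧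
      ∀ s t : ℝ, 0 ≤ s → 0 ≤ t → μ₁ (4 * μ₂inv (π s / φ₂ t)) * φ₁ t ≤ π' s) :
    -- conclusion: Assumption 2 holds
    ∃ βbarx' : ℝ → ℝ → ℝ, ∃ αbarw αbarv : ℝ → ℝ,
      IsKLFun βbarx' ∧ IsKFun αbarw ∧ IsKFun αbarv ∧
      ∀ sx sw sv t : ℝ, 0 ≤ sx → 0 ≤ sw → 0 ≤ sv → 0 ≤ t →
        μ₁ (sx + ι (μ₃ sx * φ₂ t + γw sw + γv sv) t) * φ₁ t ≤
          βbarx' sx t + αbarw sw + αbarv sv := by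
  -- basic facts
  have hμ₁mono := hμ₁.2.1.monotoneOn
  have hinv0 : μ₂inv 0 = 0 := by
    have := hμ₂inv₁ 0 le_rfl; rwa [hμ₂.1.2.2] at this
  have hinvmono : ∀ x y : ℝ, 0 ≤ x → x ≤ y → μ₂inv x ≤ μ₂inv y := by
    intro x y hx hxy
    have h1 := hμ₂inv₂ x hx
    have h2 := hμ₂inv₂ y (hx.trans hxy)
    refine (hμ₂.1.2.1.le_iff_le (Set.mem_Ici.mpr h1.2) (Set.mem_Ici.mpr h2.2)).mp ?_
    rw [h1.1, h2.1]; exact hxy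
  -- continuity of μ₂inv on [0,∞) via a monotone surjective extension
  have hinvcont : ContinuousOn μ₂inv (Set.Ici 0) := by
    set ν : ℝ → ℝ := fun x => if x < 0 then x else μ₂inv x with hν
    have hνmono : Monotone ν := by
      intro x y hxy
      simp only [hν]
      rcases lt_or_ge x 0 with hx | hx
      · rcases lt_or_ge y 0 with hy | hy
        · simpa [hx, hy] using hxy
        · simp only [if_pos hx, if_neg (not_lt.mpr hy)]
          exact le_trans hx.le (hμ₂inv₂ y hy).2
      · have hy : 0 ≤ y := hx.trans hxy
        simp only [if_neg (not_lt.mpr hx), if_neg (not_lt.mpr hy)]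
        exact hinvmono x y hx hxy
    have hνsurj : Function.Surjective ν := by
      intro z
      rcases lt_or_ge z 0 with hz | hz
      · exact ⟨z, by simp [hν, hz]⟩
      · refine ⟨μ₂ z, ?_⟩
        have hz2 : (0:ℝ) ≤ μ₂ z := kfun_nonneg hμ₂.1 hz
        simp only [hν, if_neg (not_lt.mpr hz2)]
        exact hμ₂inv₁ z hz
    refine (hνmono.continuous_of_surjective hνsurj).continuousOn.congr ?_
    intro x hx
    simp [hν, not_lt.mpr (Set.mem_Ici.mp hx)]
  -- the two K-functions from the key condition
  have hπwK : IsKFun (fun s => 3 * γw s) := by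
    refine ⟨continuousOn_const.mul hγw.1.1, ?_, ?_⟩
    · intro a ha b hb hab
      have := hγw.1.2.1 ha hb hab
      simp only; linarith
    · simp [hγw.1.2.2]
  have hπvK : IsKFun (fun s => 3 * γv s) := by
    refine ⟨continuousOn_const.mul hγv.1.1, ?_, ?_⟩
    · intro a ha b hb hab
      have := hγv.1.2.1 ha hb hab
      simp only; linarith
    · simp [hγv.1.2.2]
  obtain ⟨πw', hπw'K, hπw'⟩ := hkey _ hπwK
  obtain ⟨πv', hπv'K, hπv'⟩ := hkey _ hπvK
  -- monotonicity / nonnegativity / continuity of the K-part ingredient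
  have hg4nn : ∀ s : ℝ, 0 ≤ s → 0 ≤ 4 * μ₂inv (3 * μ₃ s) := by
    intro s hs
    have h1 : 0 ≤ μ₃ s := kfun_nonneg hμ₃ hs
    have := (hμ₂inv₂ (3 * μ₃ s) (by linarith)).2
    linarith
  have hgmono : ∀ a b : ℝ, 0 ≤ a → a ≤ b →
      μ₁ (2*a) + μ₁ (4 * μ₂inv (3 * μ₃ a)) ≤ μ₁ (2*b) + μ₁ (4 * μ₂inv (3 * μ₃ b)) := by
    intro a b ha hab
    have hb : 0 ≤ b := ha.trans hab
    have h3a : 0 ≤ μ₃ a := kfun_nonneg hμ₃ ha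
    have h3ab : μ₃ a ≤ μ₃ b := hμ₃.2.1.monotoneOn (Set.mem_Ici.mpr ha) (Set.mem_Ici.mpr hb) hab
    have hinvab := hinvmono (3 * μ₃ a) (3 * μ₃ b) (by linarith) (by linarith)
    have t1 : μ₁ (2*a) ≤ μ₁ (2*b) :=
      hμ₁mono (Set.mem_Ici.mpr (by linarith)) (Set.mem_Ici.mpr (by linarith)) (by linarith)
    have t2 : μ₁ (4 * μ₂inv (3 * μ₃ a)) ≤ μ₁ (4 * μ₂inv (3 * μ₃ b)) :=
      hμ₁mono (Set.mem_Ici.mpr (hg4nn a ha)) (Set.mem_Ici.mpr (hg4nn b hb)) (by linarith)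
    linarith
  have hgnn : ∀ s : ℝ, 0 ≤ s → 0 ≤ μ₁ (2*s) + μ₁ (4 * μ₂inv (3 * μ₃ s)) := by
    intro s hs
    have := kfun_nonneg hμ₁ (show (0:ℝ) ≤ 2*s by linarith)
    have := kfun_nonneg hμ₁ (hg4nn s hs)
    linarith
  have hgcont : ContinuousOn (fun s => μ₁ (2*s) + μ₁ (4 * μ₂inv (3 * μ₃ s))) (Set.Ici 0) := by
    have hc1 : ContinuousOn (fun s : ℝ => 3 * μ₃ s) (Set.Ici 0) := continuousOn_const.mul hμ₃.1
    have m1 : Set.MapsTo (fun s : ℝ => 3 * μ₃ s) (Set.Ici 0) (Set.Ici 0) := by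
      intro s hs
      simp only [Set.mem_Ici] at hs ⊢
      have := kfun_nonneg hμ₃ hs
      linarith
    have hc2 : ContinuousOn (fun s : ℝ => μ₂inv (3 * μ₃ s)) (Set.Ici 0) :=
      hinvcont.comp hc1 m1
    have hc3 : ContinuousOn (fun s : ℝ => 4 * μ₂inv (3 * μ₃ s)) (Set.Ici 0) :=
      continuousOn_const.mul hc2
    have m3 : Set.MapsTo (fun s : ℝ => 4 * μ₂inv (3 * μ₃ s)) (Set.Ici 0) (Set.Ici 0) :=
      fun s hs => Set.mem_Ici.mpr (hg4nn s (Set.mem_Ici.mp hs))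
    have hc4 : ContinuousOn (fun s : ℝ => μ₁ (4 * μ₂inv (3 * μ₃ s))) (Set.Ici 0) :=
      hμ₁.1.comp hc3 m3
    have hc5 : ContinuousOn (fun s : ℝ => μ₁ (2*s)) (Set.Ici 0) := by
      refine hμ₁.1.comp (continuousOn_const.mul continuousOn_id) ?_
      intro s hs
      simp only [Set.mem_Ici, id] at hs ⊢
      linarith
    exact hc5.add hc4
  refine ⟨fun s t => (μ₁ (2*s) + μ₁ (4 * μ₂inv (3 * μ₃ s))) * φ₁ t + s / (1 + t),
    πw', πv', ⟨?_, ?_⟩, hπw'K, hπv'K, ?_⟩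
  · -- K in s for fixed t
    intro t ht
    have hdt : (0:ℝ) < 1 + t := by linarith
    refine ⟨?_, ?_, ?_⟩
    · exact (hgcont.mul continuousOn_const).add ((continuous_id.div_const (1+t)).continuousOn)
    · intro a ha b hb hab
      simp only
      have h1 := hgmono a b (Set.mem_Ici.mp ha) hab.le
      have h2 : a/(1+t) < b/(1+t) := (div_lt_div_iff_of_pos_right hdt).mpr hab
      have hmul := mul_le_mul_of_nonneg_right h1 (lfun_nonneg hφ₁ ht)
      linarith
    · simp only
      norm_num [hμ₃.2.2, hinv0, hμ₁.2.2]
  · -- L in t for fixed s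
    intro s hs
    refine ⟨?_, ?_, ?_⟩
    · refine (continuousOn_const.mul hφ₁.1).add ?_
      exact ContinuousOn.div continuousOn_const
        ((continuous_const.add continuous_id).continuousOn)
        (fun t ht => by have := Set.mem_Ici.mp ht; positivity)
    · intro a ha b hb hab
      simp only
      have h1 : φ₁ b ≤ φ₁ a := hφ₁.2.1 ha hb hab
      have h2 := mul_le_mul_of_nonneg_left h1 (hgnn s hs)
      have h0a : (0:ℝ) < 1 + a := by have := Set.mem_Ici.mp ha; linarith
      have h3 : s/(1+b) ≤ s/(1+a) := by
        apply div_le_div_of_nonneg_left hs h0a (by linarith)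
      linarith
    · have t1 : Tendsto (fun t => (μ₁ (2*s) + μ₁ (4 * μ₂inv (3 * μ₃ s))) * φ₁ t)
          atTop (𝓝 0) := by
        simpa using hφ₁.2.2.const_mul (μ₁ (2*s) + μ₁ (4 * μ₂inv (3 * μ₃ s)))
      have t2 : Tendsto (fun t : ℝ => s/(1+t)) atTop (𝓝 0) :=
        Tendsto.div_atTop tendsto_const_nhds
          (tendsto_atTop_add_const_left atTop 1 tendsto_id)
      simpa using t1.add t2
  · -- the main inequality
    intro sx sw sv t hsx hsw hsv ht
    have hφ₂t := hφ₂pos t ht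
    have hφ₁t := lfun_nonneg hφ₁ ht
    have hμ₃n : 0 ≤ μ₃ sx := kfun_nonneg hμ₃ hsx
    have hA : 0 ≤ μ₃ sx * φ₂ t := mul_nonneg hμ₃n hφ₂t.le
    have hB : 0 ≤ γw sw := kfun_nonneg hγw.1 hsw
    have hC : 0 ≤ γv sv := kfun_nonneg hγv.1 hsv
    have hr : 0 ≤ μ₃ sx * φ₂ t + γw sw + γv sv := by linarith
    obtain ⟨hι_eq, hι_nn⟩ := hι₂ t ht _ hr
    set i := ι (μ₃ sx * φ₂ t + γw sw + γv sv) t with hidef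
    -- split μ₁(sx + i) ≤ μ₁(2 sx) + μ₁(2 i)
    have step1 : μ₁ (sx + i) ≤ μ₁ (2*sx) + μ₁ (2*i) := by
      rcases le_total sx i with h | h
      · have h1 : μ₁ (sx + i) ≤ μ₁ (2*i) :=
          hμ₁mono (Set.mem_Ici.mpr (by linarith)) (Set.mem_Ici.mpr (by linarith)) (by linarith)
        have h2 : 0 ≤ μ₁ (2*sx) := kfun_nonneg hμ₁ (by linarith)
        linarith
      · have h1 : μ₁ (sx + i) ≤ μ₁ (2*sx) :=
          hμ₁mono (Set.mem_Ici.mpr (by linarith)) (Set.mem_Ici.mpr (by linarith)) (by linarith)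
        have h2 : 0 ≤ μ₁ (2*i) := kfun_nonneg hμ₁ (by linarith)
        linarith
    -- generic sub-step
    have key_sub : ∀ x : ℝ, 0 ≤ x → μ₂ i ≤ x →
        μ₁ (2*i) * φ₁ t ≤ μ₁ (4 * μ₂inv x) * φ₁ t := by
      intro x hx hle
      have him : i ≤ μ₂inv x := by
        have := hinvmono (μ₂ i) x (kfun_nonneg hμ₂.1 hι_nn) hle
        rwa [hμ₂inv₁ i hι_nn] at this
      have hxinv : 0 ≤ μ₂inv x := (hμ₂inv₂ x hx).2
      have h1 : μ₁ (2*i) ≤ μ₁ (4 * μ₂inv x) :=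
        hμ₁mono (Set.mem_Ici.mpr (by linarith)) (Set.mem_Ici.mpr (by linarith)) (by linarith)
      exact mul_le_mul_of_nonneg_right h1 hφ₁t
    have hπw'0 : 0 ≤ πw' sw := kfun_nonneg hπw'K hsw
    have hπv'0 : 0 ≤ πv' sv := kfun_nonneg hπv'K hsv
    have hterm2nn : 0 ≤ μ₁ (4 * μ₂inv (3 * μ₃ sx)) * φ₁ t :=
      mul_nonneg (kfun_nonneg hμ₁ (hg4nn sx hsx)) hφ₁t
    -- step 2 by case analysis on the largest term
    have step2 : μ₁ (2*i) * φ₁ t ≤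
        μ₁ (4 * μ₂inv (3 * μ₃ sx)) * φ₁ t + πw' sw + πv' sv := by
      have hwbound : γw sw ≤ μ₃ sx * φ₂ t + γw sw + γv sv → μ₃ sx * φ₂ t ≤ γw sw →
          γv sv ≤ γw sw → μ₁ (2*i) * φ₁ t ≤ πw' sw := by
        intro _ h1 h2
        have hle : μ₂ i ≤ 3 * γw sw / φ₂ t := by
          rw [le_div_iff₀ hφ₂t, hι_eq]; linarith
        have hkw : μ₁ (4 * μ₂inv (3 * γw sw / φ₂ t)) * φ₁ t ≤ πw' sw := hπw' sw t hsw ht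
        have := key_sub _ (by positivity) hle
        linarith
      have hvbound : μ₃ sx * φ₂ t ≤ γv sv → γw sw ≤ γv sv →
          μ₁ (2*i) * φ₁ t ≤ πv' sv := by
        intro h1 h2
        have hle : μ₂ i ≤ 3 * γv sv / φ₂ t := by
          rw [le_div_iff₀ hφ₂t, hι_eq]; linarith
        have hkv : μ₁ (4 * μ₂inv (3 * γv sv / φ₂ t)) * φ₁ t ≤ πv' sv := hπv' sv t hsv ht
        have := key_sub _ (by positivity) hle
        linarith
      rcases le_total (γw sw) (μ₃ sx * φ₂ t) with h1 | h1
      · rcases le_total (γv sv) (μ₃ sx * φ₂ t) with h2 | h2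
        · -- A is largest
          have hle : μ₂ i ≤ 3 * μ₃ sx := by
            have h3 : μ₂ i * φ₂ t ≤ (3 * μ₃ sx) * φ₂ t := by rw [hι_eq]; nlinarith
            exact le_of_mul_le_mul_right (by linarith) hφ₂t
          have := key_sub _ (by linarith) hle
          linarith
        · -- C is largest
          have := hvbound h2 (by linarith)
          linarith
      · rcases le_total (γv sv) (γw sw) with h2 | h2
        · -- B is largest
          have := hwbound (by linarith) h1 h2
          linarith
        · -- C is largest
          have := hvbound (by linarith) h2
          linarith
    have hslack : 0 ≤ sx / (1 + t) := by positivity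
    have expand : μ₁ (sx + i) * φ₁ t ≤ (μ₁ (2*sx) + μ₁ (2*i)) * φ₁ t :=
      mul_le_mul_of_nonneg_right step1 hφ₁t
    simp only
    nlinarith [mul_nonneg (kfun_nonneg hμ₁ (show (0:ℝ) ≤ 2*sx by linarith)) hφ₁t]
end
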